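/- arXiv:1410.2777 — 4 statements merged into one kernel-verified Lean document; each statement's English description precedes it below -/
import Mathlib

section
/- If f is a zero-free holomorphic solution of f'' + A f = 0 on the unit disc, then A = -(f'/f)' - (f'/f)^2 on the disc; consequently, if log f (a holomorphic branch) belongs to the Bloch space, i.e. sup_{z∈D} (1-|z|^2)|f'(z)/f(z)| < ∞, then sup_{z∈D} (1-|z|^2)^2 |A(z)| < ∞. -/
/-!
The quotient `g = f'/f` satisfies the Riccati equation `g' = -A - g²`, so
`A = -g' - g²`. The Bloch bound `(1-|w|²)|g(w)| ≤ K` controls `g` on the circle of radius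
`(1-|z|)/2` about `z`, and the Cauchy estimate on that circle turns it into
`(1-|z|²)²|g'(z)| ≤ 16K`; together with `(1-|z|²)²|g(z)|² ≤ K²` this bounds `(1-|z|²)²|A(z)|`.
-/

open Metric

theorem hasDerivAt_div_of_ode {A f f' : ℂ → ℂ} {f'' : ℂ} {z : ℂ}
    (hf : HasDerivAt f (f' z) z) (hf' : HasDerivAt f' f'' z)
    (hode : f'' + A z * f z = 0) (hfz : f z ≠ 0) :
    HasDerivAt (fun w => f' w / f w) (-A z - (f' z / f z) ^ 2) z := by
  refine (hf'.div hf hfz).congr_deriv ?_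
  rw [show f'' = -A z * f z by linear_combination hode]
  field_simp

theorem half_one_sub_norm_le_one_sub_norm_sq {E : Type*} [SeminormedAddCommGroup E] {z w : E}
    (hz : ‖z‖ < 1) (hw : ‖w - z‖ ≤ (1 - ‖z‖) / 2) :
    (1 - ‖z‖) / 2 ≤ 1 - ‖w‖ ^ 2 := by
  have hwz : ‖w‖ ≤ ‖w - z‖ + ‖z‖ := norm_le_norm_sub_add w z
  nlinarith [norm_nonneg w]

theorem closedBall_half_one_sub_norm_subset_ball {E : Type*} [SeminormedAddCommGroup E] {z : E}
    (hz : ‖z‖ < 1) : closedBall z ((1 - ‖z‖) / 2) ⊆ ball (0 : E) 1 := by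
  intro w hw
  rw [mem_closedBall, dist_eq_norm] at hw
  rw [mem_ball_zero_iff]
  linarith [norm_le_norm_sub_add w z]

theorem sq_one_sub_norm_sq_mul_norm_deriv_le {g : ℂ → ℂ} {K : ℝ}
    (hg : DifferentiableOn ℂ g (ball 0 1))
    (hK : ∀ w ∈ ball (0 : ℂ) 1, (1 - ‖w‖ ^ 2) * ‖g w‖ ≤ K) {z : ℂ} (hz : z ∈ ball (0 : ℂ) 1) :
    (1 - ‖z‖ ^ 2) ^ 2 * ‖deriv g z‖ ≤ 16 * K := by
  rw [mem_ball_zero_iff] at hz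
  set r := (1 - ‖z‖) / 2
  have hr : 0 < r := by simp only [r]; linarith
  have hsub := closedBall_half_one_sub_norm_subset_ball hz
  have hsphere : ∀ w ∈ sphere z r, ‖g w‖ ≤ K / r := by
    intro w hw
    have hwr : ‖w - z‖ ≤ r := (mem_sphere_iff_norm.mp hw).le
    have hwK := hK w (hsub (sphere_subset_closedBall hw))
    rw [le_div_iff₀ hr, mul_comm]
    exact (mul_le_mul_of_nonneg_right (half_one_sub_norm_le_one_sub_norm_sq hz hwr)
      (norm_nonneg (g w))).trans hwK
  have hcauchy : ‖deriv g z‖ ≤ K / r / r :=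
    Complex.norm_deriv_le_of_forall_mem_sphere_norm_le hr (hg.diffContOnCl_ball hsub) hsphere
  have hweight : (1 - ‖z‖ ^ 2) ^ 2 ≤ 16 * r ^ 2 := by
    rw [show 16 * r ^ 2 = (4 * r) ^ 2 by ring]
    have h4r : 4 * r = 2 * (1 - ‖z‖) := by ring
    exact pow_le_pow_left₀ (by nlinarith [norm_nonneg z]) (by nlinarith [norm_nonneg z]) 2
  calc (1 - ‖z‖ ^ 2) ^ 2 * ‖deriv g z‖ ≤ 16 * r ^ 2 * (K / r / r) :=
        mul_le_mul hweight hcauchy (norm_nonneg _) (by positivity)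
    _ = 16 * K := by field_simp

/-- If `f` is a zero-free solution of `f'' + A f = 0` on the unit disc, then
`A = -(f'/f)' - (f'/f)²`; consequently, if a holomorphic logarithm of `f` is a Bloch
function, i.e. `sup (1-|z|²)|f'(z)/f(z)| < ∞`, then `A ∈ H^∞₂`. -/
theorem coefficient_formula_and_growth
    (A f f' f'' : ℂ → ℂ)
    (hf : ∀ z ∈ ball (0 : ℂ) 1, HasDerivAt f (f' z) z)
    (hf' : ∀ z ∈ ball (0 : ℂ) 1, HasDerivAt f' (f'' z) z)
    (hode : ∀ z ∈ ball (0 : ℂ) 1, f'' z + A z * f z = 0)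
    (hfne : ∀ z ∈ ball (0 : ℂ) 1, f z ≠ 0) :
    (∀ z ∈ ball (0 : ℂ) 1,
      HasDerivAt (fun w => f' w / f w) (-A z - (f' z / f z) ^ 2) z) ∧
    (∀ K : ℝ, (∀ z ∈ ball (0 : ℂ) 1, (1 - ‖z‖ ^ 2) * ‖f' z / f z‖ ≤ K) →
      ∃ N : ℝ, ∀ z ∈ ball (0 : ℂ) 1, (1 - ‖z‖ ^ 2) ^ 2 * ‖A z‖ ≤ N) := by
  have hriccati : ∀ z ∈ ball (0 : ℂ) 1,
      HasDerivAt (fun w => f' w / f w) (-A z - (f' z / f z) ^ 2) z := fun z hz =>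
    hasDerivAt_div_of_ode (hf z hz) (hf' z hz) (hode z hz) (hfne z hz)
  refine ⟨hriccati, fun K hK => ⟨16 * K + K ^ 2, fun z hz => ?_⟩⟩
  set g := fun w => f' w / f w
  have hA : A z = -deriv g z - g z ^ 2 := by rw [(hriccati z hz).deriv]; ring
  have hderiv := sq_one_sub_norm_sq_mul_norm_deriv_le
    (fun w hw => (hriccati w hw).differentiableAt.differentiableWithinAt) hK hz
  have hweight : 0 ≤ 1 - ‖z‖ ^ 2 := by
    nlinarith [norm_nonneg z, mem_ball_zero_iff.mp hz]
  have hsq : ((1 - ‖z‖ ^ 2) * ‖g z‖) ^ 2 ≤ K ^ 2 :=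
    pow_le_pow_left₀ (mul_nonneg hweight (norm_nonneg _)) (hK z hz) 2
  calc (1 - ‖z‖ ^ 2) ^ 2 * ‖A z‖ ≤ (1 - ‖z‖ ^ 2) ^ 2 * (‖deriv g z‖ + ‖g z‖ ^ 2) := by
        rw [hA]
        exact mul_le_mul_of_nonneg_left
          ((norm_sub_le _ _).trans_eq (by rw [norm_neg, norm_pow])) (by positivity)
    _ = (1 - ‖z‖ ^ 2) ^ 2 * ‖deriv g z‖ + ((1 - ‖z‖ ^ 2) * ‖g z‖) ^ 2 := by ring
    _ ≤ 16 * K + K ^ 2 := add_le_add hderiv hsq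
end

section
/- Let f be a holomorphic solution of f'' + A f = 0 on the unit disc with ‖A‖ := sup_{z∈D}(1-|z|^2)^2|A(z)| < ∞. Let (z_n) be the zeros of f and suppose K := sup_n (1-|z_n|^2)|f'(z_n)| < ∞. If 0 < c < 1 satisfies c^2 ‖A‖/(1-c)^2 < 1, then |f(ζ)| ≤ cK / (1 - c^2‖A‖/(1-c)^2) for every ζ in the union of the Euclidean discs D(z_n, c(1-|z_n|)). -/
set_option maxHeartbeats 1000000

open Metric

/-- If `f` solves `f'' + A f = 0` with `‖A‖_{H^∞₂} ≤ N`, the zeros `z_n` of `f` satisfy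
`(1-|z_n|²)|f'(z_n)| ≤ K`, and `0 < c < 1` with `c²N/(1-c)² < 1`, then
`|f(ζ)| ≤ cK/(1 - c²N/(1-c)²)` on each disc `D(z_n, c(1-|z_n|))`. -/
theorem bounded_near_zeros
    (A f f' f'' : ℂ → ℂ) (N K c : ℝ) (z : ℕ → ℂ)
    (hf : ∀ w ∈ ball (0 : ℂ) 1, HasDerivAt f (f' w) w)
    (hf' : ∀ w ∈ ball (0 : ℂ) 1, HasDerivAt f' (f'' w) w)
    (hode : ∀ w ∈ ball (0 : ℂ) 1, f'' w + A w * f w = 0)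
    (hN : ∀ w ∈ ball (0 : ℂ) 1, (1 - ‖w‖ ^ 2) ^ 2 * ‖A w‖ ≤ N)
    (hz : ∀ n, z n ∈ ball (0 : ℂ) 1)
    (hzero : ∀ n, f (z n) = 0)
    (hK : ∀ n, (1 - ‖z n‖ ^ 2) * ‖f' (z n)‖ ≤ K)
    (hc0 : 0 < c) (hc1 : c < 1)
    (hsmall : c ^ 2 * N / (1 - c) ^ 2 < 1) :
    ∀ n, ∀ ζ ∈ ball (z n) (c * (1 - ‖z n‖)),
      ‖f ζ‖ ≤ c * K / (1 - c ^ 2 * N / (1 - c) ^ 2) := by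
  intro n ζ hζ
  set a := z n with ha_def
  have ha : ‖a‖ < 1 := by simpa [mem_ball_zero_iff] using hz n
  have ha0 : (0:ℝ) ≤ ‖a‖ := norm_nonneg _
  set ra : ℝ := c * (1 - ‖a‖) with hra_def
  have hra : 0 < ra := by
    have : 0 < 1 - ‖a‖ := by linarith
    positivity
  -- N ≥ 0
  have hN0 : 0 ≤ N := by
    have h0 := hN 0 (by simp)
    have : (0:ℝ) ≤ (1 - ‖(0:ℂ)‖ ^ 2) ^ 2 * ‖A 0‖ := by positivity
    linarith
  -- K ≥ 0
  have hK0 : 0 ≤ K := by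
    have h0 := hK n
    have : (0:ℝ) ≤ (1 - ‖z n‖ ^ 2) * ‖f' (z n)‖ := by
      have h1 : ‖z n‖ < 1 := ha
      have h2 := norm_nonneg (z n)
      exact mul_nonneg (by nlinarith) (norm_nonneg _)
    linarith
  set q : ℝ := c ^ 2 * N / (1 - c) ^ 2 with hq_def
  have hq0 : 0 ≤ q := by positivity
  have hq1 : 0 < 1 - q := by linarith
  -- the closed ball fits inside the unit disc
  have hsub : closedBall a ra ⊆ ball (0 : ℂ) 1 := by
    intro s hs
    rw [mem_closedBall, dist_eq_norm] at hs
    rw [mem_ball_zero_iff]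
    have h1 : ‖s‖ ≤ ‖a‖ + ‖s - a‖ := norm_le_insert' s a
    nlinarith
  have hconv : Convex ℝ (closedBall a ra) := convex_closedBall _ _
  have hamem : a ∈ closedBall a ra := mem_closedBall_self hra.le
  -- maximum of ‖f‖ on the closed ball
  obtain ⟨w, hw, hwmax⟩ : ∃ w ∈ closedBall a ra, ∀ s ∈ closedBall a ra, ‖f s‖ ≤ ‖f w‖ := by
    obtain ⟨w, hw, hmax⟩ := (isCompact_closedBall a ra).exists_isMaxOn
      ⟨a, hamem⟩
      (fun s hs => ((hf s (hsub hs)).continuousAt.continuousWithinAt.norm))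
    exact ⟨w, hw, fun s hs => hmax hs⟩
  set M : ℝ := ‖f w‖ with hM_def
  have hM0 : 0 ≤ M := norm_nonneg _
  set N' : ℝ := N / ((1 - c) * (1 - ‖a‖)) ^ 2 with hN'_def
  have hc1' : 0 < 1 - c := by linarith
  have ha1' : 0 < 1 - ‖a‖ := by linarith
  have hN'0 : 0 ≤ N' := by positivity
  -- bound on f'' on the closed ball
  have hbA : ∀ s ∈ closedBall a ra, ‖f'' s‖ ≤ N' * M := by
    intro s hs
    have hsB := hsub hs
    have hs1 : ‖s‖ < 1 := by simpa [mem_ball_zero_iff] using hsB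
    have hsd : ‖s - a‖ ≤ ra := by rwa [mem_closedBall, dist_eq_norm] at hs
    have hs2 : ‖s‖ ≤ ‖a‖ + ra := by
      have := norm_le_insert' s a
      linarith
    have hn := norm_nonneg s
    have hlow : (1 - c) * (1 - ‖a‖) ≤ 1 - ‖s‖ ^ 2 := by nlinarith
    have hAs : ‖A s‖ ≤ N' := by
      have hb := hN s hsB
      rw [hN'_def, le_div_iff₀ (by positivity)]
      have hsq : ((1 - c) * (1 - ‖a‖)) ^ 2 ≤ (1 - ‖s‖ ^ 2) ^ 2 :=
        pow_le_pow_left₀ (by positivity) hlow 2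
      calc ‖A s‖ * ((1 - c) * (1 - ‖a‖)) ^ 2
          ≤ ‖A s‖ * (1 - ‖s‖ ^ 2) ^ 2 :=
            mul_le_mul_of_nonneg_left hsq (norm_nonneg _)
        _ = (1 - ‖s‖ ^ 2) ^ 2 * ‖A s‖ := mul_comm _ _
        _ ≤ N := hb
    have hfs : ‖f s‖ ≤ M := hwmax s hs
    have hode' : f'' s = -(A s * f s) := by
      have h := hode s hsB
      linear_combination h
    rw [hode', norm_neg, norm_mul]
    exact mul_le_mul hAs hfs (norm_nonneg _) hN'0
  -- bound on f' on the closed ball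
  have hbf' : ∀ s ∈ closedBall a ra, ‖f' s‖ ≤ ‖f' a‖ + N' * M * ra := by
    intro s hs
    have h1 : ‖f' s - f' a‖ ≤ N' * M * ‖s - a‖ :=
      hconv.norm_image_sub_le_of_norm_hasDerivWithin_le
        (fun x hx => (hf' x (hsub hx)).hasDerivWithinAt) hbA hamem hs
    have hsd : ‖s - a‖ ≤ ra := by rwa [mem_closedBall, dist_eq_norm] at hs
    have h2 : ‖f' s‖ ≤ ‖f' a‖ + ‖f' s - f' a‖ := by
      have := norm_add_le (f' a) (f' s - f' a)
      simpa using this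
    have h3 : N' * M * ‖s - a‖ ≤ N' * M * ra :=
      mul_le_mul_of_nonneg_left hsd (by positivity)
    linarith
  -- the key estimate on M
  have hMle : M ≤ c * K + q * M := by
    have h1 : ‖f w - f a‖ ≤ (‖f' a‖ + N' * M * ra) * ‖w - a‖ :=
      hconv.norm_image_sub_le_of_norm_hasDerivWithin_le
        (fun x hx => (hf x (hsub hx)).hasDerivWithinAt) hbf' hamem hw
    have hwd : ‖w - a‖ ≤ ra := by rwa [mem_closedBall, dist_eq_norm] at hw
    have hfa : f a = 0 := hzero n
    have h2 : M ≤ (‖f' a‖ + N' * M * ra) * ra := by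
      rw [hfa, sub_zero] at h1
      calc M ≤ (‖f' a‖ + N' * M * ra) * ‖w - a‖ := h1
        _ ≤ (‖f' a‖ + N' * M * ra) * ra := by
            apply mul_le_mul_of_nonneg_left hwd
            positivity
    -- ‖f' a‖ * ra ≤ c * K
    have h3 : ‖f' a‖ * ra ≤ c * K := by
      have hb := hK n
      have hfn := norm_nonneg (f' a)
      rw [hra_def]
      nlinarith [mul_le_mul_of_nonneg_left hb hc0.le,
        mul_nonneg (mul_nonneg (mul_nonneg hc0.le hfn) ha0) ha1'.le]
    -- N' * M * ra * ra = q * M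
    have h4 : N' * M * ra * ra = q * M := by
      have hd : ((1 - c) * (1 - ‖a‖)) ^ 2 ≠ 0 := by positivity
      have hd2 : ((1 - c) : ℝ) ^ 2 ≠ 0 := by positivity
      rw [hN'_def, hq_def, hra_def]
      calc N / ((1 - c) * (1 - ‖a‖)) ^ 2 * M * (c * (1 - ‖a‖)) * (c * (1 - ‖a‖))
          = N * M * (c * (1 - ‖a‖)) ^ 2 / ((1 - c) * (1 - ‖a‖)) ^ 2 := by ring
        _ = c ^ 2 * N * M / (1 - c) ^ 2 := by
            rw [div_eq_div_iff hd hd2]; ring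
        _ = c ^ 2 * N / (1 - c) ^ 2 * M := by ring
    have hexp : (‖f' a‖ + N' * M * ra) * ra = ‖f' a‖ * ra + N' * M * ra * ra := by ring
    linarith [h2, h3, h4]
  -- conclude
  have hMfinal : M ≤ c * K / (1 - q) := by
    rw [le_div_iff₀ hq1]
    nlinarith
  have hζ' : ζ ∈ closedBall a ra := ball_subset_closedBall hζ
  calc ‖f ζ‖ ≤ M := hwmax ζ hζ'
    _ ≤ c * K / (1 - q) := hMfinal
end

section
/- There exists a locally univalent meromorphic function on the unit disc whose image is the entire extended complex plane (Riemann sphere). -/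
/-!
Let `k(w) = w / (1 - w)²` be the Koebe function. Since `1 + 4 k(w) = ((1 + w) / (1 - w))²` and
the Cayley transform maps the disc onto the right half-plane, `k` maps the disc onto
`ℂ ∖ (-∞, -1/4]`.
Choosing `a³ = -4`, the branch `p(z) = a z (1 - z³)^(-2/3)` of `(-4 k(z³))^(1/3)` is locally
univalent on the disc, commutes with rotations by cube roots of unity, hence maps the disc onto
`{t | t³ ∉ [1, ∞)}`, and omits the cube roots of unity. These are the critical points of
`R(1/t) = (2 + t³) / (2t)`, so `w = (2 + p³) / (2p)` is locally univalent. It attains `∞` at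
`p = 0`, and a finite value `c` wherever `p` takes a root of `t³ - 2ct + 2`; the three roots have
product `-2`, so their cubes cannot all be positive reals, and one of them lies in the image of `p`.
-/

open Metric Complex Polynomial

lemma exists_sq_eq_re_pos_of_mem_slitPlane {z : ℂ} (hz : z ∈ slitPlane) :
    ∃ v : ℂ, v ^ 2 = z ∧ 0 < v.re := by
  obtain ⟨v, hv⟩ := IsAlgClosed.exists_pow_nat_eq z two_pos
  rcases lt_trichotomy v.re 0 with hneg | hzero | hpos
  · exact ⟨-v, by rw [neg_sq, hv], by simpa using hneg⟩
  · rw [mem_slitPlane_iff, ← hv] at hz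
    simp only [sq, mul_re, mul_im, hzero, zero_mul, mul_zero, zero_sub, add_zero, ne_eq,
      not_true_eq_false, or_false] at hz
    nlinarith [mul_self_nonneg v.im]
  · exact ⟨v, hv, hpos⟩

lemma add_one_ne_zero_of_re_pos {v : ℂ} (hv : 0 < v.re) : v + 1 ≠ 0 := fun h => by
  linarith [show v.re + 1 = 0 by simpa using congrArg re h]

lemma norm_sub_one_div_add_one_lt_one {v : ℂ} (hv : 0 < v.re) : ‖(v - 1) / (v + 1)‖ < 1 := by
  rw [norm_div, div_lt_one (norm_pos_iff.2 (add_one_ne_zero_of_re_pos hv)), norm_def, norm_def]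
  apply Real.sqrt_lt_sqrt (normSq_nonneg _)
  simp only [normSq_apply, sub_re, add_re, sub_im, add_im, one_re, one_im]
  nlinarith

lemma exists_mem_ball_div_one_sub_sq_eq {s : ℂ} (hs : 1 + 4 * s ∈ slitPlane) :
    ∃ w ∈ ball (0 : ℂ) 1, w / (1 - w) ^ 2 = s := by
  obtain ⟨v, hv, hre⟩ := exists_sq_eq_re_pos_of_mem_slitPlane hs
  have hv1 := add_one_ne_zero_of_re_pos hre
  refine ⟨(v - 1) / (v + 1), mem_ball_zero_iff.2 (norm_sub_one_div_add_one_lt_one hre), ?_⟩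
  rw [show 1 - (v - 1) / (v + 1) = 2 / (v + 1) by field_simp; ring]
  field_simp
  linear_combination hv

lemma exists_pow_eq_one_mul_of_pow_eq_pow {K : Type*} [Field K] {n : ℕ} (hn : n ≠ 0) {x y : K}
    (h : x ^ n = y ^ n) : ∃ u : K, u ^ n = 1 ∧ y = u * x := by
  rcases eq_or_ne x 0 with rfl | hx
  · exact ⟨1, one_pow n, by simpa [zero_pow hn, eq_comm, hn] using h⟩
  · refine ⟨y / x, ?_, (div_mul_cancel₀ y hx).symm⟩
    rw [div_pow, ← h, div_self (pow_ne_zero n hx)]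

lemma norm_pow_three_lt_one {z : ℂ} (hz : ‖z‖ < 1) : ‖z ^ 3‖ < 1 := by
  rw [norm_pow]
  exact pow_lt_one₀ (norm_nonneg z) hz three_ne_zero

lemma one_sub_pow_three_mem_slitPlane {z : ℂ} (hz : ‖z‖ < 1) : 1 - z ^ 3 ∈ slitPlane := by
  rw [sub_eq_add_neg]
  exact mem_slitPlane_of_norm_lt_one (by rw [norm_neg]; exact norm_pow_three_lt_one hz)

lemma one_add_pow_three_ne_zero {z : ℂ} (hz : ‖z‖ < 1) : 1 + z ^ 3 ≠ 0 :=
  slitPlane_ne_zero (mem_slitPlane_of_norm_lt_one (norm_pow_three_lt_one hz))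

noncomputable def koebeCubeRoot (a z : ℂ) : ℂ := a * z * (1 - z ^ 3) ^ (-2 / 3 : ℂ)

namespace koebeCubeRoot

lemma pow_three (a z : ℂ) : koebeCubeRoot a z ^ 3 = a ^ 3 * (z ^ 3 / (1 - z ^ 3) ^ 2) := by
  have h : ((1 - z ^ 3) ^ (-2 / 3 : ℂ)) ^ 3 = ((1 - z ^ 3) ^ 2)⁻¹ := by
    rw [← cpow_nat_mul, show ((3 : ℕ) : ℂ) * (-2 / 3) = -2 by norm_num, cpow_neg, cpow_ofNat]
  rw [koebeCubeRoot, mul_pow, mul_pow, h, div_eq_mul_inv]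
  ring

lemma mul_left {a u : ℂ} (hu : u ^ 3 = 1) (z : ℂ) :
    koebeCubeRoot a (u * z) = u * koebeCubeRoot a z := by
  rw [koebeCubeRoot, koebeCubeRoot, mul_pow, hu, one_mul]
  ring

lemma hasDerivAt (a : ℂ) {z : ℂ} (hz : ‖z‖ < 1) :
    HasDerivAt (koebeCubeRoot a)
      (a * (1 - z ^ 3) ^ (-2 / 3 : ℂ) * ((1 + z ^ 3) / (1 - z ^ 3))) z := by
  have hmem := one_sub_pow_three_mem_slitPlane hz
  have hne := slitPlane_ne_zero hmem
  refine (((hasDerivAt_id' z).const_mul a).mul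
    (((hasDerivAt_pow 3 z).const_sub 1).cpow_const (c := -2 / 3) hmem)).congr_deriv ?_
  rw [cpow_sub _ _ hne, cpow_one]
  field_simp
  push_cast
  ring

lemma deriv_ne_zero {a : ℂ} (ha : a ≠ 0) {z : ℂ} (hz : ‖z‖ < 1) :
    deriv (koebeCubeRoot a) z ≠ 0 := by
  have hne := slitPlane_ne_zero (one_sub_pow_three_mem_slitPlane hz)
  rw [(hasDerivAt a hz).deriv]
  exact mul_ne_zero (mul_ne_zero ha (cpow_ne_zero_iff.2 (Or.inl hne)))
    (div_ne_zero (one_add_pow_three_ne_zero hz) hne)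

lemma pow_three_ne_one {a : ℂ} (ha : a ^ 3 = -4) {z : ℂ} (hz : ‖z‖ < 1) :
    koebeCubeRoot a z ^ 3 ≠ 1 := by
  have hne := slitPlane_ne_zero (one_sub_pow_three_mem_slitPlane hz)
  intro h
  rw [pow_three, ha] at h
  field_simp at h
  exact one_add_pow_three_ne_zero hz <|
    (pow_eq_zero_iff two_ne_zero).1 (by linear_combination -h)

lemma exists_eq {a : ℂ} (ha : a ^ 3 = -4) {t : ℂ} (ht : 1 - t ^ 3 ∈ slitPlane) :
    ∃ z ∈ ball (0 : ℂ) 1, koebeCubeRoot a z = t := by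
  obtain ⟨w, hw, hkw⟩ :=
    exists_mem_ball_div_one_sub_sq_eq (s := -t ^ 3 / 4) (by convert ht using 1; ring)
  obtain ⟨z, rfl⟩ := IsAlgClosed.exists_pow_nat_eq w three_pos
  have hz : ‖z‖ < 1 := by
    rw [mem_ball_zero_iff, norm_pow] at hw
    exact (pow_lt_one_iff_of_nonneg (norm_nonneg z) three_ne_zero).1 hw
  have hcube : koebeCubeRoot a z ^ 3 = t ^ 3 := by rw [pow_three, ha, hkw]; ring
  obtain ⟨u, hu, hut⟩ := exists_pow_eq_one_mul_of_pow_eq_pow three_ne_zero hcube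
  refine ⟨u * z, mem_ball_zero_iff.2 ?_, by rw [mul_left hu, hut]⟩
  rwa [norm_mul, norm_eq_one_of_pow_eq_one hu three_ne_zero, one_mul]

end koebeCubeRoot

open ComplexOrder in
lemma Polynomial.exists_isRoot_not_pos_pow_of_monic {P : ℂ[X]} (hP : P.Monic) (k : ℕ)
    (h : ¬ 0 < ((-1) ^ P.natDegree * P.coeff 0) ^ k) : ∃ t, P.IsRoot t ∧ ¬ 0 < t ^ k := by
  by_contra! hpos
  have hprod : (P.roots.map (· ^ k)).prod = ((-1) ^ P.natDegree * P.coeff 0) ^ k := by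
    rw [Multiset.prod_map_pow, Multiset.map_id',
      (IsAlgClosed.splits P).coeff_zero_eq_prod_roots_of_monic hP,
      ← mul_assoc, ← pow_add, ← two_mul, pow_mul, neg_one_sq, one_pow, one_mul]
  refine h (hprod ▸ Multiset.prod_pos fun x hx => ?_)
  obtain ⟨t, ht, rfl⟩ := Multiset.mem_map.1 hx
  exact hpos t ((mem_roots hP.ne_zero).1 ht)

open ComplexOrder in
lemma exists_root_one_sub_pow_three_mem_slitPlane (c : ℂ) :
    ∃ t : ℂ, t ^ 3 - 2 * c * t + 2 = 0 ∧ 1 - t ^ 3 ∈ slitPlane := by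
  have hP : (X ^ 3 + (-C (2 * c) * X + C 2)).Monic := by
    apply monic_X_pow_add
    compute_degree!
  have hdeg : (X ^ 3 + (-C (2 * c) * X + C 2)).natDegree = 3 := by compute_degree!
  obtain ⟨t, ht, hneg⟩ := Polynomial.exists_isRoot_not_pos_pow_of_monic hP 3 (by
    rw [hdeg]; norm_num)
  refine ⟨t, by simpa [sub_eq_add_neg, add_assoc] using ht, ?_⟩
  rw [mem_slitPlane_iff_not_le_zero, sub_nonpos]
  exact fun h => hneg (zero_lt_one.trans_le h)

lemma wronskian_two_add_pow_three_ne_zero {p : ℂ → ℂ} {z : ℂ}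
    (hp : DifferentiableAt ℂ p z) (hp' : deriv p z ≠ 0) (hp3 : p z ^ 3 ≠ 1) :
    (2 + p z ^ 3) * deriv (fun z => 2 * p z) z - deriv (fun z => 2 + p z ^ 3) z * (2 * p z)
      ≠ 0 := by
  have hd := hp.hasDerivAt
  rw [(hd.const_mul 2).deriv, ((hd.fun_pow 3).const_add 2).deriv]
  have hW : (2 + p z ^ 3) * (2 * deriv p z) - (3 : ℕ) * p z ^ (3 - 1) * deriv p z * (2 * p z)
      = 4 * deriv p z * (1 - p z ^ 3) := by push_cast; ring
  rw [hW]
  exact mul_ne_zero (mul_ne_zero (by norm_num) hp') (sub_ne_zero.2 hp3.symm)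

/-- A meromorphic function on the disc is written as a quotient `f / g` of holomorphic functions;
it is locally univalent exactly when the Wronskian `f g' - f' g` has no zeros. -/
theorem exists_locally_univalent_meromorphic_onto_sphere :
    ∃ f g : ℂ → ℂ,
      DifferentiableOn ℂ f (ball (0 : ℂ) 1) ∧
      DifferentiableOn ℂ g (ball (0 : ℂ) 1) ∧
      (∀ z ∈ ball (0 : ℂ) 1, f z * deriv g z - deriv f z * g z ≠ 0) ∧
      (∀ c : ℂ, ∃ z ∈ ball (0 : ℂ) 1, g z ≠ 0 ∧ f z = c * g z) ∧
      (∃ z ∈ ball (0 : ℂ) 1, g z = 0) := by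
  obtain ⟨a, ha⟩ := IsAlgClosed.exists_pow_nat_eq (-4 : ℂ) three_pos
  have ha0 : a ≠ 0 := by rintro rfl; norm_num at ha
  set p := koebeCubeRoot a
  have hp : ∀ z ∈ ball (0 : ℂ) 1, DifferentiableAt ℂ p z := fun z hz =>
    (koebeCubeRoot.hasDerivAt a (mem_ball_zero_iff.1 hz)).differentiableAt
  refine ⟨fun z => 2 + p z ^ 3, fun z => 2 * p z,
    fun z hz => (((hp z hz).fun_pow 3).const_add 2).differentiableWithinAt,
    fun z hz => ((hp z hz).const_mul 2).differentiableWithinAt,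
    fun z hz => wronskian_two_add_pow_three_ne_zero (hp z hz)
      (koebeCubeRoot.deriv_ne_zero ha0 (mem_ball_zero_iff.1 hz))
      (koebeCubeRoot.pow_three_ne_one ha (mem_ball_zero_iff.1 hz)),
    fun c => ?_, ⟨0, mem_ball_self one_pos, by simp [p, koebeCubeRoot]⟩⟩
  obtain ⟨t, ht, hslit⟩ := exists_root_one_sub_pow_three_mem_slitPlane c
  obtain ⟨z, hz, rfl⟩ := koebeCubeRoot.exists_eq ha hslit
  have ht0 : p z ≠ 0 := fun h => by simp [p, h] at ht
  exact ⟨z, hz, mul_ne_zero two_ne_zero ht0, by linear_combination ht⟩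
end

section
/- Let f be a nonconstant holomorphic function on the unit disc with f(0) = 0 and f'(0) = 1 whose zero set is {0} ∪ Z with 0 < |ζ| for ζ ∈ Z, and suppose sup_{0<r<1} (1/2π)∫_0^{2π} log⁺|f(re^{iθ})| dθ ≤ M < ∞. Then Σ_{ζ∈Z} (1 - |ζ|) ≤ M. -/
/-!
Jensen's formula on the circle of radius `r < 1`, where `f` has a simple zero at the origin with
`f'(0) = 1`, gives `log r + Σ_{0 < |ζ| ≤ r} log (r / |ζ|) = (1/2π) ∫ log |f(re^{iθ})| dθ`, the sum
running over the zeros with multiplicity. The right-hand side is at most the mean of `log⁺ |f|`,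
hence at most `M`, and every term of the sum is nonnegative, so any finitely many of the points
`Z n` satisfy `log r + Σ log (r / |Z n|) ≤ M` for `r` close to `1`. Letting `r → 1` gives
`Σ log (1 / |Z n|) ≤ M`; conclude with `1 - |ζ| ≤ log (1 / |ζ|)`.
-/

open Metric Complex Real Filter Topology MeromorphicOn

section Order

variable {𝕜 E : Type*} [NontriviallyNormedField 𝕜] [NormedAddCommGroup E] [NormedSpace 𝕜 E]
  {f : 𝕜 → E} {x : 𝕜}

theorem AnalyticAt.dslope_self (hf : AnalyticAt 𝕜 f x) : AnalyticAt 𝕜 (dslope f x) x :=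
  let ⟨_, hp⟩ := hf
  ⟨_, hp.has_fpower_series_dslope_fslope⟩

theorem eq_sub_zpow_one_smul_dslope (hfx : f x = 0) (z : 𝕜) :
    f z = (z - x) ^ (1 : ℤ) • dslope f x z := by
  rw [zpow_one, sub_smul_dslope, hfx, sub_zero]

theorem AnalyticAt.meromorphicOrderAt_eq_one (hf : AnalyticAt 𝕜 f x) (hfx : f x = 0)
    (hf' : deriv f x ≠ 0) : meromorphicOrderAt f x = 1 :=
  (meromorphicOrderAt_eq_int_iff hf.meromorphicAt).2
    ⟨dslope f x, hf.dslope_self, by rwa [dslope_same],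
      .of_forall (eq_sub_zpow_one_smul_dslope hfx)⟩

theorem AnalyticAt.meromorphicTrailingCoeffAt_eq_deriv (hf : AnalyticAt 𝕜 f x) (hfx : f x = 0)
    (hf' : deriv f x ≠ 0) : meromorphicTrailingCoeffAt f x = deriv f x := by
  rw [hf.dslope_self.meromorphicTrailingCoeffAt_of_ne_zero_of_eq_nhdsNE (n := 1)
    (by rwa [dslope_same]) (.of_forall (eq_sub_zpow_one_smul_dslope hfx)), dslope_same]

theorem AnalyticOnNhd.one_le_divisor {U : Set 𝕜} {u : 𝕜} (hf : AnalyticOnNhd 𝕜 f U)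
    (hU : IsPreconnected U) (hx : x ∈ U) (hfx : meromorphicOrderAt f x ≠ ⊤) (hu : u ∈ U)
    (hfu : f u = 0) : 1 ≤ divisor f U u := by
  have hne : meromorphicOrderAt f u ≠ ⊤ :=
    hf.meromorphicOn.meromorphicOrderAt_ne_top_of_isPreconnected hU hx hu hfx
  rw [(hf u hu).meromorphicOrderAt_eq] at hne
  obtain ⟨n, hn⟩ := ENat.ne_top_iff_exists.1 (mt ENat.map_eq_top_iff.2 hne)
  have hn0 : n ≠ 0 := by
    rintro rfl
    exact ((hf u hu).analyticOrderAt_eq_zero.1 hn.symm) hfu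
  rw [hf.divisor_apply hu, ← hn]
  simpa [Nat.one_le_iff_ne_zero] using hn0

end Order

theorem Finset.sum_le_finsum_of_nonneg {α : Type*} {φ : α → ℝ} (hφ : ∀ a, 0 ≤ φ a)
    (hfin : φ.support.Finite) (s : Finset α) : ∑ a ∈ s, φ a ≤ ∑ᶠ a, φ a := by
  classical
  rw [finsum_eq_sum_of_support_subset φ (s := s ∪ hfin.toFinset) (by simp)]
  exact Finset.sum_le_sum_of_subset_of_nonneg Finset.subset_union_left fun a _ _ => hφ a

theorem log_mul_inv_norm_sub_nonneg {c u : ℂ} {r : ℝ} (hu : u ∈ closedBall c r) :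
    0 ≤ Real.log (r * ‖c - u‖⁻¹) := by
  rw [mem_closedBall, dist_comm, dist_eq_norm] at hu
  rcases (norm_nonneg (c - u)).eq_or_lt with h | h
  · -- `u = c`: the junk value `log 0 = 0`
    simp [← h]
  · exact Real.log_nonneg ((le_mul_inv_iff₀ h).2 (by rwa [one_mul]))

theorem AnalyticOnNhd.sum_log_add_le_circleAverage_log_norm {c : ℂ} {r : ℝ} {f : ℂ → ℂ}
    {s : Finset ℂ} (hr : 0 < r) (hf : AnalyticOnNhd ℂ f (closedBall c r))
    (hfc : meromorphicOrderAt f c ≠ ⊤) (hs : ∀ u ∈ s, u ∈ closedBall c r ∧ f u = 0) :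
    ∑ u ∈ s, Real.log (r * ‖c - u‖⁻¹) + divisor f (closedBall c r) c * Real.log r
      + Real.log ‖meromorphicTrailingCoeffAt f c‖ ≤ circleAverage (Real.log ‖f ·‖) c r := by
  set D := divisor f (closedBall c r)
  have hD : ∀ u ∈ s, 1 ≤ D u := fun u hu =>
    hf.one_le_divisor (convex_closedBall c r).isPreconnected (mem_closedBall_self hr.le) hfc
      (hs u hu).1 (hs u hu).2
  have hterm_nonneg : ∀ u, 0 ≤ (D u : ℝ) * Real.log (r * ‖c - u‖⁻¹) := by
    intro u
    by_cases hu : u ∈ closedBall c r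
    · exact mul_nonneg (by exact_mod_cast hf.divisor_nonneg u) (log_mul_inv_norm_sub_nonneg hu)
    · simp [D, hu]
  have hzeros : ∑ u ∈ s, Real.log (r * ‖c - u‖⁻¹)
      ≤ ∑ᶠ u, (D u : ℝ) * Real.log (r * ‖c - u‖⁻¹) := by
    refine (Finset.sum_le_sum fun u hu => ?_).trans (Finset.sum_le_finsum_of_nonneg hterm_nonneg
      ((D.finiteSupport (isCompact_closedBall c r)).subset fun u hu => ?_) s)
    · exact le_mul_of_one_le_left (log_mul_inv_norm_sub_nonneg (hs u hu).1)
        (by exact_mod_cast hD u hu)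
    · contrapose! hu
      simp [Function.notMem_support.1 hu]
  have hmero : MeromorphicOn f (closedBall c |r|) := by
    rw [abs_of_pos hr]; exact hf.meromorphicOn
  rw [hmero.circleAverage_log_norm hr.ne', abs_of_pos hr]
  grw [hzeros]

theorem AnalyticOnNhd.log_add_sum_log_le_circleAverage_log_norm {ι : Type*} {r : ℝ}
    {f : ℂ → ℂ} {s : Finset ι} {z : ι → ℂ} (hr : 0 < r) (hf : AnalyticOnNhd ℂ f (closedBall 0 r))
    (hf0 : f 0 = 0) (hf'0 : deriv f 0 = 1) (hz : Set.InjOn z s)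
    (hs : ∀ i ∈ s, z i ∈ closedBall 0 r ∧ f (z i) = 0) :
    Real.log r + ∑ i ∈ s, Real.log (r * ‖z i‖⁻¹) ≤ circleAverage (Real.log ‖f ·‖) 0 r := by
  classical
  have hf0a := hf 0 (mem_closedBall_self hr.le)
  have hord := hf0a.meromorphicOrderAt_eq_one hf0 (hf'0 ▸ one_ne_zero)
  have hJ := hf.sum_log_add_le_circleAverage_log_norm (s := s.image z) hr (by simp [hord])
    (by simpa using hs)
  rw [hf.meromorphicOn.divisor_apply (mem_closedBall_self hr.le), hord,
    hf0a.meromorphicTrailingCoeffAt_eq_deriv hf0 (hf'0 ▸ one_ne_zero), hf'0,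
    Finset.sum_image hz] at hJ
  simpa [add_comm] using hJ

theorem MeromorphicOn.circleAverage_log_norm_le_circleAverage_posLog_norm {c : ℂ} {R : ℝ}
    {f : ℂ → ℂ} (hf : MeromorphicOn f (sphere c |R|)) :
    circleAverage (Real.log ‖f ·‖) c R ≤ circleAverage (Real.posLog ‖f ·‖) c R :=
  circleAverage_mono hf.circleIntegrable_log_norm hf.circleIntegrable_posLog_norm
    fun _ _ => le_max_right _ _

theorem circleAverage_posLog_norm_zero_eq_integral (f : ℂ → ℂ) (r : ℝ) :
    circleAverage (Real.posLog ‖f ·‖) 0 r = 1 / (2 * Real.pi) *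
      ∫ θ in (0 : ℝ)..(2 * Real.pi), max (Real.log ‖f (r * Complex.exp (θ * Complex.I))‖) 0 := by
  simp only [circleAverage, circleMap_zero, Real.posLog_apply, max_comm, smul_eq_mul, one_div]

theorem sum_neg_log_le_of_eventually_le {ι : Type*} {s : Finset ι} {a : ι → ℝ}
    (ha : ∀ i ∈ s, a i ≠ 0) {M : ℝ}
    (h : ∀ᶠ r in 𝓝[<] 1, Real.log r + ∑ i ∈ s, Real.log (r * (a i)⁻¹) ≤ M) :
    ∑ i ∈ s, -Real.log (a i) ≤ M := by
  have hlim : Tendsto (fun r => Real.log r + ∑ i ∈ s, Real.log (r * (a i)⁻¹)) (𝓝 1)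
      (𝓝 (Real.log 1 + ∑ i ∈ s, Real.log (1 * (a i)⁻¹))) :=
    (Real.continuousAt_log one_ne_zero).tendsto.add <| tendsto_finsetSum s fun i hi =>
      ((continuous_mul_const _).continuousAt.log (by simpa using ha i hi)).tendsto
  simp only [Real.log_one, one_mul, Real.log_inv, zero_add] at hlim
  exact le_of_tendsto (hlim.mono_left nhdsWithin_le_nhds) h

theorem blaschke_sum_le_of_proximity_bound_general
    (f : ℂ → ℂ) (Z : ℕ → ℂ) (M : ℝ)
    (hf : DifferentiableOn ℂ f (ball (0 : ℂ) 1))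
    (hf0 : f 0 = 0) (hf'0 : deriv f 0 = 1)
    (hZmem : ∀ n, Z n ∈ ball (0 : ℂ) 1) (hZne : ∀ n, Z n ≠ 0)
    (hZinj : Function.Injective Z)
    (hzeros : ∀ z ∈ ball (0 : ℂ) 1, (f z = 0 ↔ z = 0 ∨ z ∈ Set.range Z))
    (hM : ∀ r : ℝ, 0 < r → r < 1 →
      (1 / (2 * Real.pi)) *
        ∫ θ in (0 : ℝ)..(2 * Real.pi),
          max (Real.log ‖f (r * Complex.exp (θ * Complex.I))‖) 0 ≤ M) :
    ∑' n, (1 - ‖Z n‖) ≤ M := by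
  have hfa : AnalyticOnNhd ℂ f (ball 0 1) := hf.analyticOnNhd isOpen_ball
  have hZnorm : ∀ n, ‖Z n‖ < 1 := fun n => mem_ball_zero_iff.1 (hZmem n)
  refine Real.tsum_le_of_sum_le (fun n => sub_nonneg.2 (hZnorm n).le) fun F => ?_
  have hJensen : ∀ᶠ r in 𝓝[<] 1, Real.log r + ∑ n ∈ F, Real.log (r * ‖Z n‖⁻¹) ≤ M := by
    filter_upwards [Ioo_mem_nhdsLT one_pos,
      (F.eventually_all).2 fun n _ => Ioo_mem_nhdsLT (hZnorm n)] with r ⟨hr0, hr1⟩ hFr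
    have hball : closedBall (0 : ℂ) r ⊆ ball 0 1 := closedBall_subset_ball hr1
    calc Real.log r + ∑ n ∈ F, Real.log (r * ‖Z n‖⁻¹)
        ≤ circleAverage (Real.log ‖f ·‖) 0 r :=
          (hfa.mono hball).log_add_sum_log_le_circleAverage_log_norm hr0 hf0 hf'0
            hZinj.injOn fun n hn => ⟨mem_closedBall_zero_iff.2 (hFr n hn).1.le,
              (hzeros _ (hZmem n)).2 (Or.inr ⟨n, rfl⟩)⟩
      _ ≤ circleAverage (Real.posLog ‖f ·‖) 0 r :=
        MeromorphicOn.circleAverage_log_norm_le_circleAverage_posLog_norm fun z hz =>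
          (hfa z (hball (sphere_subset_closedBall (abs_of_pos hr0 ▸ hz)))).meromorphicAt
      _ ≤ M := circleAverage_posLog_norm_zero_eq_integral f r ▸ hM r hr0 hr1
  calc ∑ n ∈ F, (1 - ‖Z n‖)
      ≤ ∑ n ∈ F, -Real.log ‖Z n‖ := Finset.sum_le_sum fun n _ => by
        linarith [Real.log_le_sub_one_of_pos (norm_pos_iff.2 (hZne n))]
    _ ≤ M := sum_neg_log_le_of_eventually_le (fun n _ => norm_ne_zero_iff.2 (hZne n)) hJensen

/-- Blaschke-type bound via Jensen's formula: if `f` is holomorphic on the unit disc with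
a simple zero at `0` (`f(0)=0`, `f'(0)=1`), its other zeros are the (distinct) points
`Z n ≠ 0`, and the Nevanlinna proximity function is bounded by `M`, then
`Σ (1 - |Z n|) ≤ M`. -/
theorem blaschke_sum_le_of_proximity_bound
    (f : ℂ → ℂ) (Z : ℕ → ℂ) (M : ℝ)
    (hf : DifferentiableOn ℂ f (ball (0 : ℂ) 1))
    (hnc : ¬ ∀ z ∈ ball (0 : ℂ) 1, f z = 0)
    (hf0 : f 0 = 0) (hf'0 : deriv f 0 = 1)
    (hZmem : ∀ n, Z n ∈ ball (0 : ℂ) 1) (hZne : ∀ n, Z n ≠ 0)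
    (hZinj : Function.Injective Z)
    (hzeros : ∀ z ∈ ball (0 : ℂ) 1, (f z = 0 ↔ z = 0 ∨ z ∈ Set.range Z))
    (hM : ∀ r : ℝ, 0 < r → r < 1 →
      (1 / (2 * Real.pi)) *
        ∫ θ in (0 : ℝ)..(2 * Real.pi),
          max (Real.log ‖f (r * Complex.exp (θ * Complex.I))‖) 0 ≤ M) :
    ∑' n, (1 - ‖Z n‖) ≤ M :=
  blaschke_sum_le_of_proximity_bound_general f Z M hf hf0 hf'0 hZmem hZne hZinj hzeros hM
end
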